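/- arXiv:1507.05947 — 3 statements merged into one kernel-verified Lean document; each statement's English description precedes it below -/
import Mathlib

section
/- For s > 0 and λ ∈ ℂ with Re(λ²) > 0, ∫_s^∞ ∫₀^∞ e^{-t w²} λ e^{-t λ²} dt dw + ∫_{-s}^∞ ∫₀^∞ e^{-t w²} λ e^{-t λ²} dt dw = ∫₀^∞ (√π/√t) λ e^{-t λ²} dt = π λ (λ²)^{-1/2}, which equals π if Re(λ) > 0 and -π if Re(λ) < 0. -/
/-!
For fixed `w` the inner integral is `λ / (w² + λ²)`, which is integrable and even in `w`; hence
the two `w`-integrals add up to the integral over all of `ℝ`, and Fubini together with the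
Gaussian integral `∫ e^{-t w²} dw = √(π / t)` gives the middle expression. The substitution
`t = x²` turns that into a Gaussian integral over `(0, ∞)` with complex parameter `λ²`, whose
value is `π λ (λ²)^{-1/2}`. Finally `(λ²)^{1/2}` is the square root of `λ²` with positive real
part, that is `λ` or `-λ`.
-/

open MeasureTheory Set Complex

theorem integral_norm_cexp_neg_mul_Ioi {z : ℂ} (hz : 0 < z.re) :
    ∫ t in Ioi (0 : ℝ), ‖cexp (-z * t)‖ = z.re⁻¹ := by
  have h := integral_exp_mul_Ioi (neg_neg_iff_pos.mpr hz) 0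
  simp only [mul_zero, Real.exp_zero, neg_div_neg_eq, one_div] at h
  simp_rw [norm_exp, ← h]
  congr with t
  simp

theorem integrable_inv_sq_add {r : ℝ} (hr : 0 < r) : Integrable fun w : ℝ ↦ (w ^ 2 + r)⁻¹ := by
  refine ((integrable_inv_one_add_sq.comp_div (Real.sqrt_pos.mpr hr).ne').const_mul r⁻¹).congr
    (Filter.Eventually.of_forall fun w ↦ ?_)
  simp only [div_pow, Real.sq_sqrt hr.le]
  field_simp
  ring

theorem integral_Ioi_add_integral_Ioi_neg_of_even {E : Type*} [NormedAddCommGroup E]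
    [NormedSpace ℝ E] [CompleteSpace E] {g : ℝ → E} (hg : Integrable g)
    (heven : ∀ w, g (-w) = g w) (s : ℝ) :
    (∫ w in Ioi s, g w) + ∫ w in Ioi (-s), g w = ∫ w, g w := by
  have hreflect : ∫ w in Ioi (-s), g w = ∫ w in Iic s, g w := by
    rw [← neg_neg s, ← integral_comp_neg_Ioi, neg_neg]
    simp_rw [heven]
  rw [hreflect, add_comm]
  exact intervalIntegral.integral_Iic_add_Ioi hg.integrableOn hg.integrableOn

theorem ofReal_mul_cpow_of_pos {r : ℝ} (hr : 0 < r) {z : ℂ} (hz : z ≠ 0) (w : ℂ) :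
    ((r : ℂ) * z) ^ w = (r : ℂ) ^ w * z ^ w := by
  have hr' : (r : ℂ) ≠ 0 := ofReal_ne_zero.mpr hr.ne'
  rw [cpow_def_of_ne_zero (mul_ne_zero hr' hz), log_ofReal_mul hr hz, cpow_def_of_ne_zero hr',
    cpow_def_of_ne_zero hz, ← exp_add, ofReal_log hr.le, add_mul]

theorem mul_sq_cpow_neg_one_half_of_re_pos {z : ℂ} (hz : 0 < z.re) :
    z * (z ^ 2) ^ (-(1 : ℂ) / 2) = 1 := by
  rw [neg_div, cpow_neg, one_div, sq_cpow_two_inv hz, mul_inv_cancel₀]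
  rintro rfl
  simp at hz

theorem mul_sq_cpow_neg_one_half_of_re_neg {z : ℂ} (hz : z.re < 0) :
    z * (z ^ 2) ^ (-(1 : ℂ) / 2) = -1 := by
  have h := mul_sq_cpow_neg_one_half_of_re_pos (z := -z) (by simpa using hz)
  rwa [neg_sq, neg_mul, neg_eq_iff_eq_neg] at h

section GaussianMulCexp

variable (a c : ℂ)

theorem gaussian_mul_cexp_eq (w t : ℝ) :
    cexp (-(t : ℂ) * (w : ℂ) ^ 2) * a * cexp (-(t : ℂ) * c) =
      a * cexp (-((w : ℂ) ^ 2 + c) * t) := by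
  rw [mul_right_comm, ← exp_add, mul_comm]
  ring_nf

variable {c}

theorem integrable_gaussian_mul_cexp (hc : 0 < c.re) :
    Integrable (fun p : ℝ × ℝ ↦ cexp (-(p.2 : ℂ) * (p.1 : ℂ) ^ 2) * a * cexp (-(p.2 : ℂ) * c))
      ((volume : Measure ℝ).prod (volume.restrict (Ioi 0))) := by
  have hre (w : ℝ) : ((w : ℂ) ^ 2 + c).re = w ^ 2 + c.re := by simp [← ofReal_pow]
  have hpos (w : ℝ) : 0 < ((w : ℂ) ^ 2 + c).re := by rw [hre]; positivity
  rw [integrable_prod_iff (by fun_prop)]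
  simp_rw [gaussian_mul_cexp_eq, norm_mul]
  refine ⟨.of_forall fun w ↦ ?_, ?_⟩
  · have hneg : (-((w : ℂ) ^ 2 + c)).re < 0 := by simpa only [neg_re, neg_lt_zero] using hpos w
    exact (integrableOn_exp_mul_complex_Ioi hneg 0).const_mul a
  · simp_rw [integral_const_mul, integral_norm_cexp_neg_mul_Ioi (hpos _), hre]
    exact (integrable_inv_sq_add hc).const_mul _

-- For `t ≤ 0` both sides are junk zeros: the integrand is not integrable and `√t = 0`.
theorem integral_gaussian_mul_cexp (t : ℝ) :
    ∫ w : ℝ, cexp (-(t : ℂ) * (w : ℂ) ^ 2) * a * cexp (-(t : ℂ) * c) =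
      ((Real.sqrt Real.pi / Real.sqrt t : ℝ) : ℂ) * a * cexp (-(t : ℂ) * c) := by
  have hgauss : ∫ w : ℝ, cexp (-(t : ℂ) * (w : ℂ) ^ 2) = ((Real.sqrt (Real.pi / t) : ℝ) : ℂ) := by
    rw [← integral_gaussian, ← integral_complex_ofReal]
    push_cast
    rfl
  simp_rw [mul_assoc, integral_mul_const, hgauss, Real.sqrt_div Real.pi_pos.le]

theorem integral_Ioi_add_integral_Ioi_neg_gaussian_mul_cexp (hc : 0 < c.re) (s : ℝ) :
    ((∫ w in Ioi s, ∫ t in Ioi (0 : ℝ), cexp (-(t : ℂ) * (w : ℂ) ^ 2) * a * cexp (-(t : ℂ) * c)) +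
      ∫ w in Ioi (-s), ∫ t in Ioi (0 : ℝ), cexp (-(t : ℂ) * (w : ℂ) ^ 2) * a * cexp (-(t : ℂ) * c))
      = ∫ t in Ioi (0 : ℝ),
          ((Real.sqrt Real.pi / Real.sqrt t : ℝ) : ℂ) * a * cexp (-(t : ℂ) * c) := by
  have hK := integrable_gaussian_mul_cexp a hc
  rw [integral_Ioi_add_integral_Ioi_neg_of_even hK.integral_prod_left (fun w ↦ by simp) s,
    integral_integral_swap hK]
  simp_rw [integral_gaussian_mul_cexp]

theorem integral_sqrt_pi_div_sqrt_mul_cexp (hc : 0 < c.re) :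
    ∫ t in Ioi (0 : ℝ), ((Real.sqrt Real.pi / Real.sqrt t : ℝ) : ℂ) * a * cexp (-(t : ℂ) * c)
      = (Real.pi : ℂ) * a * c ^ (-(1 : ℂ) / 2) := by
  rw [← integral_comp_rpow_Ioi_of_pos two_pos]
  have hsubst : ∀ x ∈ Ioi (0 : ℝ), (2 * x ^ ((2 : ℝ) - 1)) •
      (((Real.sqrt Real.pi / Real.sqrt (x ^ (2 : ℝ)) : ℝ) : ℂ) * a *
        cexp (-((x ^ (2 : ℝ) : ℝ) : ℂ) * c))
      = (2 * Real.sqrt Real.pi * a : ℂ) * cexp (-c * (x : ℂ) ^ 2) := by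
    intro x (hx : 0 < x)
    rw [Real.rpow_two, Real.sqrt_sq hx.le, show (2 : ℝ) - 1 = 1 by norm_num, Real.rpow_one,
      real_smul]
    have hx' : (x : ℂ) ≠ 0 := ofReal_ne_zero.mpr hx.ne'
    push_cast
    field_simp
  have hc0 : c ≠ 0 := by rintro rfl; simp at hc
  have hsqrt : ((Real.pi : ℂ) / c) ^ (1 / 2 : ℂ) = Real.sqrt Real.pi * c ^ (-(1 : ℂ) / 2) := by
    rw [div_eq_mul_inv, ofReal_mul_cpow_of_pos Real.pi_pos (inv_ne_zero hc0),
      inv_cpow _ _ (slitPlane_arg_ne_pi (.inl hc)), ← cpow_neg, neg_div, Real.sqrt_eq_rpow,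
      ofReal_cpow Real.pi_pos.le]
    push_cast
    rfl
  have hpi : (Real.sqrt Real.pi : ℂ) * Real.sqrt Real.pi = Real.pi := by
    rw [← ofReal_mul, Real.mul_self_sqrt Real.pi_pos.le]
  rw [setIntegral_congr_fun measurableSet_Ioi hsubst, integral_const_mul,
    integral_gaussian_complex_Ioi hc, hsqrt]
  linear_combination a * c ^ (-(1 : ℂ) / 2) * hpi

end GaussianMulCexp

theorem stmt7_general (s : ℝ) (lam : ℂ) (hlam : 0 < (lam ^ 2).re) :
    ((∫ w in Set.Ioi s, ∫ t in Set.Ioi (0:ℝ),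
        Complex.exp (-(t:ℂ) * (w:ℂ) ^ 2) * lam * Complex.exp (-(t:ℂ) * lam ^ 2)) +
     (∫ w in Set.Ioi (-s), ∫ t in Set.Ioi (0:ℝ),
        Complex.exp (-(t:ℂ) * (w:ℂ) ^ 2) * lam * Complex.exp (-(t:ℂ) * lam ^ 2))
      = ∫ t in Set.Ioi (0:ℝ),
          ((Real.sqrt Real.pi / Real.sqrt t : ℝ) : ℂ) * lam * Complex.exp (-(t:ℂ) * lam ^ 2)) ∧
    ((∫ t in Set.Ioi (0:ℝ),
        ((Real.sqrt Real.pi / Real.sqrt t : ℝ) : ℂ) * lam * Complex.exp (-(t:ℂ) * lam ^ 2))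
      = (Real.pi : ℂ) * lam * (lam ^ 2) ^ (-(1:ℂ)/2)) ∧
    (0 < lam.re → (Real.pi : ℂ) * lam * (lam ^ 2) ^ (-(1:ℂ)/2) = (Real.pi : ℂ)) ∧
    (lam.re < 0 → (Real.pi : ℂ) * lam * (lam ^ 2) ^ (-(1:ℂ)/2) = -(Real.pi : ℂ)) := by
  refine ⟨integral_Ioi_add_integral_Ioi_neg_gaussian_mul_cexp lam hlam s,
    integral_sqrt_pi_div_sqrt_mul_cexp lam hlam, fun h ↦ ?_, fun h ↦ ?_⟩
  · rw [mul_assoc, mul_sq_cpow_neg_one_half_of_re_pos h, mul_one]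
  · rw [mul_assoc, mul_sq_cpow_neg_one_half_of_re_neg h, mul_neg_one]

/-- For s > 0 and Re(λ²) > 0, the sum of the two iterated integrals over (s,∞) and (-s,∞)
equals ∫₀^∞ (√π/√t) λ e^{-tλ²} dt = πλ(λ²)^{-1/2}, which is π if Re λ > 0 and -π if Re λ < 0. -/
theorem stmt7 (s : ℝ) (hs : 0 < s) (lam : ℂ) (hlam : 0 < (lam ^ 2).re) :
    ((∫ w in Set.Ioi s, ∫ t in Set.Ioi (0:ℝ),
        Complex.exp (-(t:ℂ) * (w:ℂ) ^ 2) * lam * Complex.exp (-(t:ℂ) * lam ^ 2)) +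
     (∫ w in Set.Ioi (-s), ∫ t in Set.Ioi (0:ℝ),
        Complex.exp (-(t:ℂ) * (w:ℂ) ^ 2) * lam * Complex.exp (-(t:ℂ) * lam ^ 2))
      = ∫ t in Set.Ioi (0:ℝ),
          ((Real.sqrt Real.pi / Real.sqrt t : ℝ) : ℂ) * lam * Complex.exp (-(t:ℂ) * lam ^ 2)) ∧
    ((∫ t in Set.Ioi (0:ℝ),
        ((Real.sqrt Real.pi / Real.sqrt t : ℝ) : ℂ) * lam * Complex.exp (-(t:ℂ) * lam ^ 2))
      = (Real.pi : ℂ) * lam * (lam ^ 2) ^ (-(1:ℂ)/2)) ∧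
    (0 < lam.re → (Real.pi : ℂ) * lam * (lam ^ 2) ^ (-(1:ℂ)/2) = (Real.pi : ℂ)) ∧
    (lam.re < 0 → (Real.pi : ℂ) * lam * (lam ^ 2) ^ (-(1:ℂ)/2) = -(Real.pi : ℂ)) :=
  stmt7_general s lam hlam
end

section
/- Let (λ_j) be a sequence of complex numbers with multiplicities m_j ∈ ℕ such that the counting function N(c) = Σ_{|λ_j| ≤ c} m_j satisfies N(c) ≤ C₁ c^{d/2} for all c ≥ 1, and suppose Re(λ_j) ≥ c > 0 for all j ≥ N+1. Then Σ_{j > N} m_j e^{-t Re(λ_j)} ≤ K e^{-tc/2} for all t ≥ 1, where K = Σ_{k≥N+1} N(a(k+1)) e^{-k/2} < ∞ for suitable a > 1. -/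
/-! Sort the eigenvalues into the shells `⌊Re λ⌋ = k`. By the cone condition shell `k` lies in the
disc `|λ| ≤ a (k + 1)`, so its total multiplicity is at most `C₁ (a (k + 1))^{d/2}`, while each of
its terms `e^{-Re λ / 2}` is at most `e^{-k/2}`; hence `Σ m_j e^{-Re λ_j / 2}` converges. For
`t ≥ 1` and `c ≤ Re λ` one has `t Re λ ≥ Re λ / 2 + t c / 2`, so this sum serves as `K`. -/

open Finset Real

theorem re_nonneg_of_norm_le_mul_re {z : ℂ} {a : ℝ} (ha : 0 < a) (h : ‖z‖ ≤ a * z.re) :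
    0 ≤ z.re :=
  nonneg_of_mul_nonneg_right ((norm_nonneg z).trans h) ha

theorem summable_mul_of_floor_shell_bound {ι : Type*} {w x : ι → ℝ} {φ : ℝ → ℝ} {B : ℕ → ℝ}
    (hw : ∀ i, 0 ≤ w i) (hx : ∀ i, 0 ≤ x i) (hφ : Antitone φ) (hφ₀ : ∀ y, 0 ≤ φ y)
    (hB : ∀ (k : ℕ) (F : Finset ι), (∀ i ∈ F, x i < k + 1) → ∑ i ∈ F, w i ≤ B k)
    (hBφ : Summable fun k : ℕ => B k * φ k) :
    Summable fun i => w i * φ (x i) := by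
  have hB₀ (k : ℕ) : 0 ≤ B k := by simpa using hB k ∅ (by simp)
  have shell (F : Finset ι) (k : ℕ) :
      ∑ i ∈ F with ⌊x i⌋₊ = k, w i * φ (x i) ≤ B k * φ k := by
    calc ∑ i ∈ F with ⌊x i⌋₊ = k, w i * φ (x i)
        ≤ ∑ i ∈ F with ⌊x i⌋₊ = k, w i * φ k := by
          refine sum_le_sum fun i hi => mul_le_mul_of_nonneg_left (hφ ?_) (hw i)
          rw [← (mem_filter.mp hi).2]
          exact Nat.floor_le (hx i)
      _ = (∑ i ∈ F with ⌊x i⌋₊ = k, w i) * φ k := (sum_mul ..).symm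
      _ ≤ B k * φ k := by
          refine mul_le_mul_of_nonneg_right (hB k _ fun i hi => ?_) (hφ₀ k)
          rw [← (mem_filter.mp hi).2]
          exact Nat.lt_floor_add_one _
  refine summable_of_sum_le (c := ∑' k, B k * φ k) (fun i => mul_nonneg (hw i) (hφ₀ _)) fun F => ?_
  calc ∑ i ∈ F, w i * φ (x i)
      = ∑ k ∈ F.image (⌊x ·⌋₊), ∑ i ∈ F with ⌊x i⌋₊ = k, w i * φ (x i) :=
        (sum_fiberwise_of_maps_to (fun i hi => mem_image_of_mem _ hi) _).symm
    _ ≤ ∑ k ∈ F.image (⌊x ·⌋₊), B k * φ k := sum_le_sum fun k _ => shell F k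
    _ ≤ ∑' k, B k * φ k := hBφ.sum_le_tsum _ fun k _ => mul_nonneg (hB₀ k) (hφ₀ k)

theorem summable_add_one_pow_mul_exp_neg_mul (k : ℕ) {r : ℝ} (hr : 0 < r) :
    Summable fun n : ℕ => ((n : ℝ) + 1) ^ k * exp (-r * n) := by
  have := ((summable_nat_add_iff 1).mpr (summable_pow_mul_exp_neg_nat_mul k hr)).mul_left (exp r)
  refine this.congr fun n => ?_
  rw [mul_left_comm, ← exp_add]
  push_cast
  ring_nf

theorem rpow_half_le_pow {r : ℝ} (hr : 1 ≤ r) (d : ℕ) : r ^ ((d : ℝ) / 2) ≤ r ^ d := by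
  rw [← rpow_natCast]
  exact rpow_le_rpow_of_exponent_le hr (by linarith [(d.cast_nonneg : (0 : ℝ) ≤ d)])

theorem summable_mul_exp_neg_re_half (lam : ℕ → ℂ) (m : ℕ → ℕ) (s : Set ℕ) (d : ℕ)
    (Ncount : ℝ → ℝ) (C₁ a : ℝ) (ha : 1 ≤ a)
    (hcount : ∀ r : ℝ, ∀ F : Finset ℕ, (∀ j ∈ F, ‖lam j‖ ≤ r) →
      (∑ j ∈ F, (m j : ℝ)) ≤ Ncount r)
    (hN : ∀ r : ℝ, 1 ≤ r → Ncount r ≤ C₁ * r ^ ((d : ℝ) / 2))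
    (hcone : ∀ j ∈ s, ‖lam j‖ ≤ a * (lam j).re) :
    Summable fun j : s => (m j : ℝ) * exp (-(lam j).re / 2) := by
  have hC₁ : 0 ≤ C₁ := by
    have h₀ : 0 ≤ Ncount 1 := by simpa using hcount 1 ∅ (by simp)
    simpa using h₀.trans (hN 1 le_rfl)
  have hre (j : s) : 0 ≤ (lam j).re :=
    re_nonneg_of_norm_le_mul_re (by linarith) (hcone j j.2)
  refine summable_mul_of_floor_shell_bound (x := fun j : s => (lam j).re)
    (φ := fun y => exp (-y / 2)) (B := fun k => C₁ * (a * (k + 1)) ^ d)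
    (fun _ => Nat.cast_nonneg _) hre
    (fun y z h => exp_le_exp.mpr (by linarith)) (fun _ => (exp_pos _).le) (fun k F hF => ?_) ?_
  · have hk : 1 ≤ a * (k + 1) := by nlinarith [(k.cast_nonneg : (0 : ℝ) ≤ k)]
    calc ∑ j ∈ F, (m j : ℝ) = ∑ j ∈ F.map (Function.Embedding.subtype _), (m j : ℝ) := by
          rw [sum_map]; rfl
      _ ≤ Ncount (a * (k + 1)) := hcount _ _ fun j hj => by
          obtain ⟨j, hjF, rfl⟩ := mem_map.mp hj
          calc ‖lam j‖ ≤ a * (lam j).re := hcone j j.2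
            _ ≤ a * (k + 1) := by gcongr; exact (hF j hjF).le
      _ ≤ C₁ * (a * (k + 1)) ^ ((d : ℝ) / 2) := hN _ hk
      _ ≤ C₁ * (a * (k + 1)) ^ d := mul_le_mul_of_nonneg_left (rpow_half_le_pow hk d) hC₁
  · refine ((summable_add_one_pow_mul_exp_neg_mul d one_half_pos).mul_left (C₁ * a ^ d)).congr
      fun k => ?_
    rw [mul_pow]
    ring_nf

theorem exp_neg_mul_le_exp_neg_half_mul {t x c : ℝ} (ht : 1 ≤ t) (hx : 0 ≤ x) (hcx : c ≤ x) :
    exp (-t * x) ≤ exp (-x / 2) * exp (-t * c / 2) := by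
  rw [← exp_add]
  exact exp_le_exp.mpr (by nlinarith)

theorem stmt12_general (lam : ℕ → ℂ) (m : ℕ → ℕ) (d : ℕ) (N : ℕ)
    (Ncount : ℝ → ℝ) (C₁ a c : ℝ) (ha : 1 < a)
    (hcount : ∀ r : ℝ, ∀ F : Finset ℕ, (∀ j ∈ F, ‖lam j‖ ≤ r) →
      (∑ j ∈ F, (m j : ℝ)) ≤ Ncount r)
    (hN : ∀ r : ℝ, 1 ≤ r → Ncount r ≤ C₁ * r ^ ((d : ℝ) / 2))
    (hre : ∀ j, N < j → c ≤ (lam j).re)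
    (hcone : ∀ j, N < j → ‖lam j‖ ≤ a * (lam j).re) :
    ∃ K : ℝ, 0 ≤ K ∧ ∀ t : ℝ, 1 ≤ t →
      (Summable fun j : {j : ℕ // N < j} => (m j.1 : ℝ) * Real.exp (-t * (lam j.1).re)) ∧
      (∑' j : {j : ℕ // N < j}, (m j.1 : ℝ) * Real.exp (-t * (lam j.1).re))
        ≤ K * Real.exp (-t * c / 2) := by
  have hS : Summable fun j : {j : ℕ // N < j} => (m j.1 : ℝ) * exp (-(lam j.1).re / 2) :=
    summable_mul_exp_neg_re_half lam m {j | N < j} d Ncount C₁ a ha.le hcount hN hcone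
  refine ⟨∑' j : {j : ℕ // N < j}, (m j.1 : ℝ) * exp (-(lam j.1).re / 2),
    tsum_nonneg fun j => by positivity, fun t ht => ?_⟩
  have hle (j : {j : ℕ // N < j}) : (m j.1 : ℝ) * exp (-t * (lam j.1).re) ≤
      (m j.1 : ℝ) * exp (-(lam j.1).re / 2) * exp (-t * c / 2) := by
    have hre₀ : 0 ≤ (lam j.1).re := re_nonneg_of_norm_le_mul_re (by linarith) (hcone j j.2)
    rw [mul_assoc]
    gcongr
    exact exp_neg_mul_le_exp_neg_half_mul ht hre₀ (hre j j.2)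
  have hS' := hS.mul_right (exp (-t * c / 2))
  have hsum := hS'.of_nonneg_of_le (fun j => by positivity) hle
  exact ⟨hsum, (hsum.tsum_le_tsum hle hS').trans_eq tsum_mul_right⟩

/-- Weyl-law tail estimate: if the eigenvalue counting function satisfies
N(c) ≤ C₁ c^{d/2}, the eigenvalues beyond index N lie in a cone |λ| ≤ a Re λ and have
Re λ_j ≥ c > 0, then Σ_{j>N} m_j e^{-t Re λ_j} ≤ K e^{-tc/2} for t ≥ 1. -/
theorem stmt12 (lam : ℕ → ℂ) (m : ℕ → ℕ) (d : ℕ) (N : ℕ)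
    (Ncount : ℝ → ℝ) (C₁ a c : ℝ) (ha : 1 < a) (hc : 0 < c)
    (hcount : ∀ r : ℝ, ∀ F : Finset ℕ, (∀ j ∈ F, ‖lam j‖ ≤ r) →
      (∑ j ∈ F, (m j : ℝ)) ≤ Ncount r)
    (hN : ∀ r : ℝ, 1 ≤ r → Ncount r ≤ C₁ * r ^ ((d : ℝ) / 2))
    (hre : ∀ j, N < j → c ≤ (lam j).re)
    (hcone : ∀ j, N < j → ‖lam j‖ ≤ a * (lam j).re) :
    ∃ K : ℝ, 0 ≤ K ∧ ∀ t : ℝ, 1 ≤ t →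
      (Summable fun j : {j : ℕ // N < j} => (m j.1 : ℝ) * Real.exp (-t * (lam j.1).re)) ∧
      (∑' j : {j : ℕ // N < j}, (m j.1 : ℝ) * Real.exp (-t * (lam j.1).re))
        ≤ K * Real.exp (-t * c / 2) :=
  stmt12_general lam m d N Ncount C₁ a c ha hcount hN hre hcone
end

section
/- Suppose R(s) = ∏_{p=0}^{d-1} S_p(s + μ_p)^{(-1)^p} where each S_p satisfies the functional equation S_p(u)/S_p(-u) = exp(-c ∫₀^u P_p(r) dr) with P_p even polynomials, and Σ_{p} (-1)^p [P_p(s + μ_p) + P_p(s - μ_p)]-type combination f(s) is a constant A. Then R(s)/R(-s) = exp(-c·A·s). -/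
/-!
Each `S_p` turns a sign change of its argument into the factor `exp (-c F_p)`, so `R s / R (-s)`
is the exponential of `-c` times the alternating sum `g s` of the shifted antiderivatives
`F_p (s + μ_p) + F_p (s - μ_p)`. By hypothesis `g' = A`, and `g 0 = 0` because each `F_p` is the
antiderivative of an even function vanishing at `0`, hence odd. So `g s = A s`.
-/

open Finset

theorem eq_of_hasDerivAt_eq {𝕜 G : Type*} [RCLike 𝕜] [NormedAddCommGroup G] [NormedSpace 𝕜 G]
    {f g f' : 𝕜 → G} (hf : ∀ x, HasDerivAt f (f' x) x) (hg : ∀ x, HasDerivAt g (f' x) x)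
    {a : 𝕜} (ha : f a = g a) : f = g := by
  have hconst := is_const_of_deriv_eq_zero (f := f - g)
    (fun x => ((hf x).sub (hg x)).differentiableAt)
    (fun x => by simpa using ((hf x).sub (hg x)).deriv)
  funext x
  simpa [ha, sub_eq_zero] using hconst x a

theorem odd_of_hasDerivAt_of_even {𝕜 G : Type*} [RCLike 𝕜] [NormedAddCommGroup G]
    [NormedSpace 𝕜 G] {F P : 𝕜 → G} (hF : ∀ u, HasDerivAt F (P u) u) (hP : P.Even)
    (hF0 : F 0 = 0) : F.Odd := fun u => by
  have hreflect : ∀ v, HasDerivAt (fun w => -F (-w)) (P v) v := fun v => by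
    simpa [hP v, Function.comp_def] using ((hF (-v)).scomp v (hasDerivAt_neg v)).fun_neg
  have := congrFun (eq_of_hasDerivAt_eq hreflect hF (a := 0) (by simp [hF0])) (-u)
  simpa using this.symm

theorem sum_shifted_odd_antideriv_eq_mul {𝕜 : Type*} [RCLike 𝕜] {ι : Type*} (t : Finset ι)
    {F P : ι → 𝕜 → 𝕜} (w μ : ι → 𝕜) {A : 𝕜} (hF : ∀ p u, HasDerivAt (F p) (P p u) u)
    (hodd : ∀ p, (F p).Odd)
    (hA : ∀ s, ∑ p ∈ t, w p * (P p (s + μ p) + P p (s - μ p)) = A) (s : 𝕜) :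
    ∑ p ∈ t, w p * (F p (s + μ p) + F p (s - μ p)) = A * s := by
  have hterm : ∀ p x, HasDerivAt (fun s => w p * (F p (s + μ p) + F p (s - μ p)))
      (w p * (P p (x + μ p) + P p (x - μ p))) x := fun p x =>
    (((hF p _).comp_add_const x (μ p)).add ((hF p _).comp_sub_const x (μ p))).const_mul (w p)
  have hsum : ∀ x, HasDerivAt (fun s => ∑ p ∈ t, w p * (F p (s + μ p) + F p (s - μ p))) A x :=
    fun x => hA x ▸ HasDerivAt.fun_sum fun p _ => hterm p x
  have hlin : ∀ x, HasDerivAt (fun s => A * s) A x := fun x => by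
    simpa using (hasDerivAt_id x).const_mul A
  refine congrFun (eq_of_hasDerivAt_eq hsum hlin (a := 0) ?_) s
  simp [fun p => hodd p (μ p)]

theorem mul_div_mul_neg_eq_exp {S F : ℂ → ℂ} {c : ℂ}
    (hfe : ∀ u, S u / S (-u) = Complex.exp (-c * F u)) (s μ : ℂ) :
    S (s + μ) * S (s - μ) / (S (-s + μ) * S (-s - μ))
      = Complex.exp (-c * (F (s + μ) + F (s - μ))) := by
  rw [mul_div_mul_comm, mul_add, Complex.exp_add, ← hfe, ← hfe]
  ring_nf

theorem ite_even_div_ite_even {K : Type*} [Field K] (p : ℕ) (x y : K) :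
    (if Even p then x else x⁻¹) / (if Even p then y else y⁻¹)
      = if Even p then x / y else (x / y)⁻¹ := by
  split_ifs
  · rfl
  · rw [inv_div_inv, inv_div]

theorem ite_even_exp_eq_exp_neg_one_pow_mul (p : ℕ) (z : ℂ) :
    (if Even p then Complex.exp z else (Complex.exp z)⁻¹) = Complex.exp ((-1) ^ p * z) := by
  rcases Nat.even_or_odd p with hp | hp
  · simp [hp, hp.neg_one_pow]
  · simp [hp.neg_one_pow, Complex.exp_neg, Nat.not_even_iff_odd.mpr hp]

theorem stmt16_general (d : ℕ) (S : ℕ → ℂ → ℂ) (P F : ℕ → ℂ → ℂ) (μ : ℕ → ℂ)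
    (c A : ℂ) (R : ℂ → ℂ)
    (hF0 : ∀ p, F p 0 = 0)
    (hF : ∀ p u, HasDerivAt (F p) (P p u) u)
    (hPeven : ∀ p u, P p (-u) = P p u)
    (hfe : ∀ p u, S p u / S p (-u) = Complex.exp (-c * F p u))
    (hR : ∀ s, R s = ∏ p ∈ Finset.range d,
      (if Even p then S p (s + μ p) * S p (s - μ p)
        else (S p (s + μ p) * S p (s - μ p))⁻¹))
    (hA : ∀ s, ∑ p ∈ Finset.range d, (-1 : ℂ) ^ p * (P p (s + μ p) + P p (s - μ p)) = A) :
    ∀ s, R s / R (-s) = Complex.exp (-c * A * s) := by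
  intro s
  have hodd p := odd_of_hasDerivAt_of_even (hF p) (hPeven p) (hF0 p)
  calc R s / R (-s)
      = ∏ p ∈ range d, Complex.exp ((-1) ^ p * (-c * (F p (s + μ p) + F p (s - μ p)))) := by
        rw [hR, hR, ← prod_div_distrib]
        refine prod_congr rfl fun p _ => ?_
        rw [ite_even_div_ite_even, mul_div_mul_neg_eq_exp (hfe p),
          ite_even_exp_eq_exp_neg_one_pow_mul]
    _ = Complex.exp (-c * ∑ p ∈ range d, (-1) ^ p * (F p (s + μ p) + F p (s - μ p))) := by
        simp only [← Complex.exp_sum, mul_sum, mul_left_comm]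
    _ = Complex.exp (-c * A * s) := by
        rw [sum_shifted_odd_antideriv_eq_mul _ _ _ hF hodd hA, mul_assoc]

/-- Abstract form of the Ruelle functional equation: if R is an alternating product of
factors S_p(s+μ_p)S_p(s-μ_p), each S_p satisfying S_p(u)/S_p(-u) = exp(-c F_p(u)) with
F_p the odd antiderivative of the even polynomial-like function P_p, and the alternating
sum of shifted P_p's is the constant A, then R(s)/R(-s) = exp(-cAs). -/
theorem stmt16 (d : ℕ) (S : ℕ → ℂ → ℂ) (P F : ℕ → ℂ → ℂ) (μ : ℕ → ℂ)
    (c A : ℂ) (R : ℂ → ℂ)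
    (hSne : ∀ p u, S p u ≠ 0)
    (hF0 : ∀ p, F p 0 = 0)
    (hF : ∀ p u, HasDerivAt (F p) (P p u) u)
    (hPeven : ∀ p u, P p (-u) = P p u)
    (hfe : ∀ p u, S p u / S p (-u) = Complex.exp (-c * F p u))
    (hR : ∀ s, R s = ∏ p ∈ Finset.range d,
      (if Even p then S p (s + μ p) * S p (s - μ p)
        else (S p (s + μ p) * S p (s - μ p))⁻¹))
    (hA : ∀ s, ∑ p ∈ Finset.range d, (-1 : ℂ) ^ p * (P p (s + μ p) + P p (s - μ p)) = A) :
    ∀ s, R s / R (-s) = Complex.exp (-c * A * s) :=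
  stmt16_general d S P F μ c A R hF0 hF hPeven hfe hR hA
end
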